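/- arXiv:2512.18335 — 2 statements merged into one kernel-verified Lean document; each statement's English description precedes it below -/
import Mathlib

section
/- Let X be a finite subset of α with n = |X| odd and n ≥ 3 (so that I(n+1) = I(n)), write I = I(n), and let x⁺ ∈ α with x⁺ ∉ X and x⁺ < x_(I−1). Set X' = X ∪ {x⁺}. Then L(X') = ({x⁺} ∪ L(X)) \ {x_(I−1)} and R(X') = {x_(I−1)} ∪ R(X). -/
open Finset

/-- Median index `I(n) = ⌈n/2⌉`. -/
def medianIdx (n : ℕ) : ℕ := (n + 1) / 2

/-- 1-indexed rank of `x` in `X`: the number of elements of `X` that are `≤ x`.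
For `x ∈ X`, `rank X x = i` means `x` is the `i`-th smallest element of `X`. -/
def rank {α : Type*} [LinearOrder α] (X : Finset α) (x : α) : ℕ :=
  (X.filter (fun y => y ≤ x)).card

/-- Left part of the median partition: elements of rank `< I(|X|)`. -/
def medL {α : Type*} [LinearOrder α] (X : Finset α) : Finset α :=
  X.filter (fun x => rank X x < medianIdx X.card)

/-- Right part of the median partition: elements of rank `≥ I(|X|)`. -/
def medR {α : Type*} [LinearOrder α] (X : Finset α) : Finset α :=
  X.filter (fun x => medianIdx X.card ≤ rank X x)

lemma rank_lt_rank {α : Type*} [LinearOrder α] (X : Finset α) {a b : α}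
    (hb : b ∈ X) (h : a < b) : rank X a < rank X b := by
  apply Finset.card_lt_card
  rw [Finset.ssubset_iff_of_subset]
  · exact ⟨b, by simp [Finset.mem_filter, hb], by simp [h.not_ge]⟩
  · intro z hz
    simp only [Finset.mem_filter] at *
    exact ⟨hz.1, hz.2.trans h.le⟩

theorem median_insert_odd_below {α : Type*} [LinearOrder α]
    (X : Finset α) (hn3 : 3 ≤ X.card) (hodd : Odd X.card)
    (xIm1 : α) (hxIm1 : xIm1 ∈ X) (hrank : rank X xIm1 = medianIdx X.card - 1)
    (xp : α) (hxp : xp ∉ X) (hlt : xp < xIm1)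
    (X' : Finset α) (hX' : X' = X ∪ {xp}) :
    medL X' = (insert xp (medL X)) \ {xIm1} ∧ medR X' = insert xIm1 (medR X) := by
  subst hX'
  obtain ⟨k, hk⟩ := hodd
  have hk1 : 1 ≤ k := by omega
  have hcard' : (X ∪ {xp}).card = X.card + 1 := by
    rw [union_comm, ← insert_eq, card_insert_of_notMem hxp]
  have hIk : medianIdx X.card = k + 1 := by unfold medianIdx; omega
  have hI' : medianIdx (X.card + 1) = k + 1 := by unfold medianIdx; omega
  have hrIm1 : rank X xIm1 = k := by omega
  have hrank' : ∀ x, rank (X ∪ {xp}) x = rank X x + (if xp ≤ x then 1 else 0) := by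
    intro x
    unfold rank
    rw [filter_union, card_union_of_disjoint]
    · congr 1
      rw [filter_singleton]
      split <;> simp
    · exact Finset.disjoint_filter_filter (Finset.disjoint_singleton_right.mpr hxp)
  have hxpr : rank X xp < k := by
    have := rank_lt_rank X hxIm1 hlt
    omega
  have hneq : xp ≠ xIm1 := ne_of_lt hlt
  constructor
  · ext a
    simp only [medL, mem_filter, mem_union, mem_singleton, hcard', hI', hIk, hrank',
      mem_sdiff, mem_insert]
    by_cases hap : a = xp
    · subst hap
      simp [hxp, hneq, le_refl]
      omega
    · by_cases haX : a ∈ X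
      · rcases lt_trichotomy a xIm1 with h | h | h
        · have h1 : rank X a < k := by have := rank_lt_rank X hxIm1 h; omega
          have hne : a ≠ xIm1 := ne_of_lt h
          simp [haX, hap, hne]
          split <;> omega
        · subst h
          have hle : xp ≤ a := hlt.le
          simp [haX, hle, hrIm1]
        · have h1 : k < rank X a := by have := rank_lt_rank X haX h; omega
          have hne : a ≠ xIm1 := ne_of_gt h
          simp [haX, hap, hne]
          split <;> omega
      · simp [haX, hap]
  · ext a
    simp only [medR, mem_filter, mem_union, mem_singleton, hcard', hI', hIk, hrank',
      mem_insert]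
    by_cases hap : a = xp
    · subst hap
      simp [hxp, hneq, le_refl]
      omega
    · by_cases haX : a ∈ X
      · rcases lt_trichotomy a xIm1 with h | h | h
        · have h1 : rank X a < k := by have := rank_lt_rank X hxIm1 h; omega
          have hne : a ≠ xIm1 := ne_of_lt h
          simp [haX, hap, hne]
          split <;> omega
        · subst h
          have hle : xp ≤ a := hlt.le
          simp [haX, hle, hrIm1]
        · have h1 : k < rank X a := by have := rank_lt_rank X haX h; omega
          have hne : a ≠ xIm1 := ne_of_gt h
          simp [haX, hap, hne]
          split <;> omega
      · simp [haX, hap]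
        exact fun h => haX (h ▸ hxIm1)
end

section
/- Let X be a finite subset of α with n = |X| odd and n ≥ 3, write I = I(n), and let x⁻ ∈ R(X). Set X' = X \ {x⁻}. Then L(X') = L(X) \ {x_(I−1)} and R(X') = ({x_(I−1)} ∪ R(X)) \ {x⁻}. -/
open Finset

lemma rank_mono {α : Type*} [LinearOrder α] (X : Finset α) {x y : α} (h : x ≤ y) :
    rank X x ≤ rank X y := by
  apply Finset.card_le_card
  intro z hz
  simp only [Finset.mem_filter] at *
  exact ⟨hz.1, hz.2.trans h⟩

lemma rank_strict {α : Type*} [LinearOrder α] (X : Finset α) {x y : α}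
    (hy : y ∈ X) (h : x < y) : rank X x < rank X y := by
  apply Finset.card_lt_card
  constructor
  · intro z hz
    simp only [Finset.mem_filter] at *
    exact ⟨hz.1, hz.2.trans h.le⟩
  · intro hsub
    have := hsub (by simp [hy] : y ∈ X.filter (fun z => z ≤ y))
    simp only [Finset.mem_filter] at this
    exact absurd this.2 (not_le.mpr h)

lemma rank_inj {α : Type*} [LinearOrder α] (X : Finset α) {x y : α}
    (hx : x ∈ X) (hy : y ∈ X) (h : rank X x = rank X y) : x = y := by
  rcases lt_trichotomy x y with hlt | heq | hgt
  · exact absurd h (rank_strict X hy hlt).ne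
  · exact heq
  · exact absurd h.symm (rank_strict X hx hgt).ne

lemma rank_erase {α : Type*} [LinearOrder α] (X : Finset α) (xm x : α) (hm : xm ∈ X) :
    rank (X.erase xm) x = if xm ≤ x then rank X x - 1 else rank X x := by
  unfold rank
  rw [Finset.filter_erase]
  split
  · exact Finset.card_erase_of_mem (by simp [hm, *])
  · rw [Finset.erase_eq_of_notMem (by simp [*])]

theorem median_delete_odd_right {α : Type*} [LinearOrder α]
    (X : Finset α) (hn : 3 ≤ X.card) (hodd : Odd X.card)
    (xIm1 : α) (hxIm1 : xIm1 ∈ X) (hrank : rank X xIm1 = medianIdx X.card - 1)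
    (xm : α) (hxm : xm ∈ medR X)
    (X' : Finset α) (hX' : X' = X \ {xm}) :
    medL X' = medL X \ {xIm1} ∧ medR X' = (insert xIm1 (medR X)) \ {xm} := by
  obtain ⟨k, hk⟩ := hodd
  have hk1 : 1 ≤ k := by omega
  have hI : medianIdx X.card = k + 1 := by unfold medianIdx; omega
  have hxmX : xm ∈ X := (Finset.mem_filter.mp hxm).1
  have hxmrank : k + 1 ≤ rank X xm := by
    have := (Finset.mem_filter.mp hxm).2
    rwa [hI] at this
  subst hX'
  rw [Finset.sdiff_singleton_eq_erase]
  have hcard' : (X.erase xm).card = 2 * k := by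
    rw [Finset.card_erase_of_mem hxmX]; omega
  have hI' : medianIdx (X.erase xm).card = k := by
    rw [hcard']; unfold medianIdx; omega
  have hrankIm1 : rank X xIm1 = k := by omega
  constructor
  · ext x
    simp only [medL, Finset.mem_filter, Finset.mem_sdiff, Finset.mem_erase,
      Finset.mem_singleton]
    rw [hI, hI']
    by_cases hx : x ∈ X
    · have hxim : x = xIm1 ↔ rank X x = k :=
        ⟨fun h => h ▸ hrankIm1, fun h => rank_inj X hx hxIm1 (h.trans hrankIm1.symm)⟩
      rw [rank_erase X xm x hxmX]
      by_cases hle : xm ≤ x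
      · have h1 : k + 1 ≤ rank X x := hxmrank.trans (rank_mono X hle)
        rw [if_pos hle]
        constructor
        · rintro ⟨_, h2⟩
          exfalso; omega
        · rintro ⟨⟨_, h2⟩, _⟩
          exfalso; omega
      · have hne : x ≠ xm := fun h => hle (h ▸ le_refl x)
        rw [if_neg hle]
        constructor
        · rintro ⟨_, h2⟩
          exact ⟨⟨hx, by omega⟩, fun he => absurd (hxim.mp he) (by omega)⟩
        · rintro ⟨⟨_, h2⟩, hne1⟩
          have h3 : rank X x ≠ k := fun h => hne1 (hxim.mpr h)
          exact ⟨⟨hne, hx⟩, by omega⟩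
    · constructor
      · rintro ⟨⟨_, h⟩, _⟩
        exact absurd h hx
      · rintro ⟨⟨h, _⟩, _⟩
        exact absurd h hx
  · ext x
    simp only [medR, Finset.mem_filter, Finset.mem_sdiff, Finset.mem_insert,
      Finset.mem_erase, Finset.mem_singleton]
    rw [hI, hI']
    by_cases hx : x ∈ X
    · have hxim : x = xIm1 ↔ rank X x = k :=
        ⟨fun h => h ▸ hrankIm1, fun h => rank_inj X hx hxIm1 (h.trans hrankIm1.symm)⟩
      rw [rank_erase X xm x hxmX]
      by_cases hxe : x = xm
      · constructor
        · rintro ⟨⟨hne, _⟩, _⟩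
          exact absurd hxe hne
        · rintro ⟨_, hne⟩
          exact absurd hxe hne
      · by_cases hle : xm ≤ x
        · have h1 : k + 1 ≤ rank X x := hxmrank.trans (rank_mono X hle)
          rw [if_pos hle]
          constructor
          · rintro ⟨⟨hne, _⟩, _⟩
            exact ⟨Or.inr ⟨hx, h1⟩, hne⟩
          · rintro ⟨_, hne⟩
            exact ⟨⟨hne, hx⟩, by omega⟩
        · rw [if_neg hle]
          constructor
          · rintro ⟨_, h2⟩
            by_cases h3 : rank X x = k
            · exact ⟨Or.inl (hxim.mpr h3), hxe⟩
            · exact ⟨Or.inr ⟨hx, by omega⟩, hxe⟩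
          · rintro ⟨h | ⟨_, h⟩, _⟩
            · have := hxim.mp h
              exact ⟨⟨hxe, hx⟩, by omega⟩
            · exact ⟨⟨hxe, hx⟩, by omega⟩
    · constructor
      · rintro ⟨⟨_, h⟩, _⟩
        exact absurd h hx
      · rintro ⟨h | ⟨h, _⟩, _⟩
        · exact absurd (h ▸ hxIm1) hx
        · exact absurd h hx
end
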